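/- As formal power series in q, (q^2;q^2)_∞ / (q;q^2)_∞ = ∑_{n≥0} q^{n(n+1)/2}. -/

import Mathlib

/-- The infinite q-Pochhammer symbol `(a; q)_∞ = ∏_{j ≥ 0} (1 - a q^j)`. -/
noncomputable def qPochInf (a q : ℂ) : ℂ := ∏' j : ℕ, (1 - a * q ^ j)

/-- The finite q-Pochhammer symbol `(a; q)_n = ∏_{j = 0}^{n-1} (1 - a q^j)`. -/
noncomputable def qPoch (a q : ℂ) (n : ℕ) : ℂ := ∏ j ∈ Finset.range n, (1 - a * q ^ j)

/-!
Splitting `(q;q)_∞` into even and odd factors and using `(1 + q^j)(1 - q^j) = 1 - q^(2j)` turns the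
left side into `(-q;q)_∞² (q;q)_∞`. For the Gaussian binomials `[N, m]` one has the finite identity
`∑_{k ≤ n} q^(k(k+1)/2) [2n+1, n+k+1] = (-q;q)_n²`, by induction on `n` from the two q-Pascal rules.
As `n → ∞`, `[2n+1, n+k+1] → 1 / (q;q)_∞` for each `k` and the `[N, m]` are uniformly bounded, so
by Tannery's theorem the finite sums tend to `(∑_k q^(k(k+1)/2)) / (q;q)_∞`, which is therefore
`(-q;q)_∞²`.
-/

open Filter Finset Topology

section QPochhammer

variable {a q : ℂ}

lemma norm_mul_pow_lt_one (ha : ‖a‖ < 1) (hq : ‖q‖ ≤ 1) (j : ℕ) : ‖a * q ^ j‖ < 1 := by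
  rw [norm_mul, norm_pow]
  exact (mul_le_of_le_one_right (norm_nonneg a) (pow_le_one₀ (norm_nonneg q) hq)).trans_lt ha

lemma one_sub_mul_pow_ne_zero (ha : ‖a‖ < 1) (hq : ‖q‖ ≤ 1) (j : ℕ) : 1 - a * q ^ j ≠ 0 := by
  intro h
  have := norm_mul_pow_lt_one ha hq j
  rw [← sub_eq_zero.mp h, norm_one] at this
  exact this.false

lemma qPoch_ne_zero (ha : ‖a‖ < 1) (hq : ‖q‖ ≤ 1) (n : ℕ) : qPoch a q n ≠ 0 :=
  prod_ne_zero_iff.mpr fun j _ => one_sub_mul_pow_ne_zero ha hq j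

lemma qPoch_succ (a q : ℂ) (n : ℕ) : qPoch a q (n + 1) = qPoch a q n * (1 - a * q ^ n) :=
  prod_range_succ _ n

lemma summable_norm_mul_pow (a : ℂ) (hq : ‖q‖ < 1) : Summable fun j : ℕ => ‖a * q ^ j‖ := by
  simpa [norm_mul, norm_pow] using
    (summable_geometric_of_lt_one (norm_nonneg q) hq).mul_left ‖a‖

lemma multipliable_one_sub_mul_pow (a : ℂ) (hq : ‖q‖ < 1) :
    Multipliable fun j : ℕ => 1 - a * q ^ j := by
  simpa [sub_eq_add_neg] using
    multipliable_one_add_of_summable (f := fun j => -(a * q ^ j))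
      (by simpa using summable_norm_mul_pow a hq)

lemma qPochInf_ne_zero (ha : ‖a‖ < 1) (hq : ‖q‖ < 1) : qPochInf a q ≠ 0 := by
  simpa [qPochInf, sub_eq_add_neg] using
    tprod_one_add_ne_zero_of_summable (f := fun j => -(a * q ^ j))
      (by simpa [← sub_eq_add_neg] using one_sub_mul_pow_ne_zero ha hq.le)
      (by simpa using summable_norm_mul_pow a hq)

lemma tendsto_qPoch (a : ℂ) (hq : ‖q‖ < 1) :
    Tendsto (qPoch a q) atTop (𝓝 (qPochInf a q)) :=
  (multipliable_one_sub_mul_pow a hq).hasProd.tendsto_prod_nat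

lemma qPochInf_mul_qPochInf_sq (hq : ‖q‖ < 1) :
    qPochInf q (q ^ 2) * qPochInf (q ^ 2) (q ^ 2) = qPochInf q q := by
  have hq2 : ‖q ^ 2‖ < 1 := by rw [norm_pow]; exact pow_lt_one₀ (norm_nonneg q) hq two_ne_zero
  have heven (k : ℕ) : 1 - q * q ^ (2 * k) = 1 - q * (q ^ 2) ^ k := by rw [pow_mul]
  have hodd (k : ℕ) : 1 - q * q ^ (2 * k + 1) = 1 - q ^ 2 * (q ^ 2) ^ k := by ring
  have := tprod_even_mul_odd (f := fun j => 1 - q * q ^ j)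
    (by simpa only [heven] using multipliable_one_sub_mul_pow q hq2)
    (by simpa only [hodd] using multipliable_one_sub_mul_pow (q ^ 2) hq2)
  simpa only [qPochInf, heven, hodd] using this

lemma qPochInf_neg_mul_qPochInf (hq : ‖q‖ < 1) :
    qPochInf (-q) q * qPochInf q q = qPochInf (q ^ 2) (q ^ 2) := by
  rw [qPochInf, qPochInf, qPochInf, ← (multipliable_one_sub_mul_pow (-q) hq).tprod_mul
    (multipliable_one_sub_mul_pow q hq)]
  congr 1 with j
  ring

end QPochhammer

def gaussBinom {R : Type*} [CommRing R] (q : R) : ℕ → ℕ → R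
  | _, 0 => 1
  | 0, _ + 1 => 0
  | N + 1, m + 1 => gaussBinom q N m + q ^ (m + 1) * gaussBinom q N (m + 1)

section GaussBinom

variable {R : Type*} [CommRing R] (q : R)

@[simp]
lemma gaussBinom_zero_right (N : ℕ) : gaussBinom q N 0 = 1 := by
  cases N <;> rfl

lemma gaussBinom_succ_succ (N m : ℕ) :
    gaussBinom q (N + 1) (m + 1) = gaussBinom q N m + q ^ (m + 1) * gaussBinom q N (m + 1) :=
  rfl

lemma gaussBinom_eq_zero_of_lt {N m : ℕ} (h : N < m) : gaussBinom q N m = 0 := by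
  induction N generalizing m with
  | zero => obtain ⟨m, rfl⟩ := Nat.exists_eq_add_of_lt h; rfl
  | succ N ih =>
    obtain ⟨m, rfl⟩ := Nat.exists_eq_add_of_lt (Nat.zero_lt_of_lt h)
    rw [zero_add, gaussBinom_succ_succ, ih (by omega), ih (by omega), mul_zero, add_zero]

@[simp]
lemma gaussBinom_self (N : ℕ) : gaussBinom q N N = 1 := by
  induction N with
  | zero => rfl
  | succ N ih =>
    rw [gaussBinom_succ_succ, ih, gaussBinom_eq_zero_of_lt q (Nat.lt_add_one N), mul_zero, add_zero]

end GaussBinom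

theorem gaussBinom_mul_qPoch_mul_qPoch (q : ℂ) {N m : ℕ} (h : m ≤ N) :
    gaussBinom q N m * qPoch q q m * qPoch q q (N - m) = qPoch q q N := by
  induction N generalizing m with
  | zero => obtain rfl := Nat.le_zero.mp h; simp [qPoch]
  | succ N ih =>
    obtain _ | m := m
    · simp [qPoch]
    have hlast : gaussBinom q N (m + 1) * qPoch q q (m + 1) * qPoch q q (N - m)
        = qPoch q q N * (1 - q ^ (N - m)) := by
      obtain hm | rfl := Nat.lt_or_eq_of_le (Nat.le_of_succ_le_succ h)
      · rw [show N - m = N - (m + 1) + 1 by omega, qPoch_succ q q (N - (m + 1)), ← ih hm]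
        ring
      · simp [gaussBinom_eq_zero_of_lt q (Nat.lt_add_one m)]
    have hpow : q ^ (m + 1) * q ^ (N - m) = q * q ^ N := by
      rw [← pow_add, ← pow_succ']; congr 1; omega
    rw [qPoch_succ] at hlast
    rw [Nat.add_sub_add_right, gaussBinom_succ_succ, qPoch_succ q q N, qPoch_succ q q m]
    linear_combination (1 - q * q ^ m) * ih (m := m) (by omega) + q ^ (m + 1) * hlast
      - qPoch q q N * hpow

section GaussBinomComplex

variable {q : ℂ}

lemma gaussBinom_eq_div (hq : ‖q‖ < 1) {N m : ℕ} (h : m ≤ N) :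
    gaussBinom q N m = qPoch q q N / (qPoch q q m * qPoch q q (N - m)) := by
  have hne := qPoch_ne_zero hq hq.le
  rw [eq_div_iff (mul_ne_zero (hne m) (hne (N - m))), ← mul_assoc,
    gaussBinom_mul_qPoch_mul_qPoch q h]

lemma gaussBinom_add_symm (hq : ‖q‖ < 1) (m j : ℕ) :
    gaussBinom q (m + j) m = gaussBinom q (m + j) j := by
  rw [gaussBinom_eq_div hq (by omega), gaussBinom_eq_div hq (by omega), Nat.add_sub_cancel_left,
    Nat.add_sub_cancel, mul_comm]

lemma gaussBinom_succ_succ' (hq : ‖q‖ < 1) {N m : ℕ} (h : m ≤ N) :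
    gaussBinom q (N + 1) (m + 1) = q ^ (N - m) * gaussBinom q N m + gaussBinom q N (m + 1) := by
  obtain ⟨j, rfl⟩ := Nat.exists_eq_add_of_le h
  obtain _ | j := j
  · simp [gaussBinom_eq_zero_of_lt q (Nat.lt_add_one m)]
  rw [show m + (j + 1) + 1 = m + 1 + (j + 1) by ring, gaussBinom_add_symm hq (m + 1) (j + 1),
    show m + 1 + (j + 1) = m + 1 + j + 1 by ring, gaussBinom_succ_succ,
    ← gaussBinom_add_symm hq (m + 1) j, show m + 1 + j = m + (j + 1) by ring,
    gaussBinom_add_symm hq m (j + 1), Nat.add_sub_cancel_left]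
  ring

lemma gaussBinom_add_two_add_two (hq : ‖q‖ < 1) {N m : ℕ} (h : m ≤ N) :
    gaussBinom q (N + 2) (m + 2) = q ^ (N - m) * gaussBinom q N m
      + (1 + q ^ (N + 1)) * gaussBinom q N (m + 1) + q ^ (m + 2) * gaussBinom q N (m + 2) := by
  have hpow : q ^ (N - m) * q ^ (m + 1) = q ^ (N + 1) := by rw [← pow_add]; congr 1; omega
  rw [gaussBinom_succ_succ' hq (by omega : m + 1 ≤ N + 1), Nat.add_sub_add_right,
    gaussBinom_succ_succ, gaussBinom_succ_succ]
  linear_combination gaussBinom q N (m + 1) * hpow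

end GaussBinomComplex

lemma triangle_succ (k : ℕ) : (k + 1) * (k + 1 + 1) / 2 = k * (k + 1) / 2 + (k + 1) := by
  rw [show (k + 1) * (k + 1 + 1) = k * (k + 1) + (k + 1) * 2 by ring,
    Nat.add_mul_div_right _ _ two_pos]

lemma le_triangle (k : ℕ) : k ≤ k * (k + 1) / 2 :=
  (Nat.le_div_iff_mul_le two_pos).mpr (by rcases k with _ | k <;> nlinarith)

def triangularGaussSum (q : ℂ) (n : ℕ) : ℂ :=
  ∑ k ∈ range (n + 1), q ^ (k * (k + 1) / 2) * gaussBinom q (2 * n + 1) (n + k + 1)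

lemma triangularGaussSum_eq_sum_range (q : ℂ) {n K : ℕ} (hK : n + 1 ≤ K) :
    triangularGaussSum q n
      = ∑ k ∈ range K, q ^ (k * (k + 1) / 2) * gaussBinom q (2 * n + 1) (n + k + 1) := by
  refine sum_subset (range_subset_range.mpr hK) fun k _ hk => ?_
  rw [gaussBinom_eq_zero_of_lt q (by simp only [mem_range] at hk; omega), mul_zero]

section TriangularGaussSum

variable {q : ℂ}

theorem triangularGaussSum_succ (hq : ‖q‖ < 1) (n : ℕ) :
    triangularGaussSum q (n + 1) = (1 + q ^ (n + 1)) ^ 2 * triangularGaussSum q n := by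
  have hX : ∑ k ∈ range (n + 2),
        q ^ (k * (k + 1) / 2) * (q ^ (2 * n + 1 - (n + k)) * gaussBinom q (2 * n + 1) (n + k))
      = q ^ (n + 1) * triangularGaussSum q n + q ^ (n + 1) * gaussBinom q (2 * n + 1) (n + 1) := by
    rw [sum_range_succ', triangularGaussSum, mul_sum]
    congr 1
    · refine sum_congr rfl fun k hk => ?_
      have hk : k < n + 1 := mem_range.mp hk
      simp only [← mul_assoc, ← pow_add, triangle_succ, show n + (k + 1) = n + k + 1 by ring]
      congr 2
      omega
    · have hsymm : gaussBinom q (2 * n + 1) n = gaussBinom q (2 * n + 1) (n + 1) := by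
        simpa only [show n + 1 + n = 2 * n + 1 by ring] using
          (gaussBinom_add_symm hq (n + 1) n).symm
      simp [hsymm, show 2 * n + 1 - n = n + 1 by omega]
  have hY : ∑ k ∈ range (n + 2),
        q ^ (k * (k + 1) / 2) * ((1 + q ^ (2 * n + 2)) * gaussBinom q (2 * n + 1) (n + k + 1))
      = (1 + q ^ (2 * n + 2)) * triangularGaussSum q n := by
    rw [triangularGaussSum_eq_sum_range q (by omega : n + 1 ≤ n + 2), mul_sum]
    exact sum_congr rfl fun k _ => by ring
  have hZ : ∑ k ∈ range (n + 2),
        q ^ (k * (k + 1) / 2) * (q ^ (n + k + 2) * gaussBinom q (2 * n + 1) (n + k + 2))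
      = q ^ (n + 1) * triangularGaussSum q n - q ^ (n + 1) * gaussBinom q (2 * n + 1) (n + 1) := by
    have hshift := sum_range_succ'
      (fun k => q ^ (k * (k + 1) / 2) * gaussBinom q (2 * n + 1) (n + k + 1)) (n + 2)
    rw [← triangularGaussSum_eq_sum_range q (by omega)] at hshift
    simp only [zero_mul, Nat.zero_div, pow_zero, one_mul, add_zero] at hshift
    rw [hshift, mul_add, add_sub_cancel_right, mul_sum]
    refine sum_congr rfl fun k _ => ?_
    simp only [← mul_assoc, ← pow_add, triangle_succ, show n + (k + 1) + 1 = n + k + 2 by ring]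
    congr 2
    ring
  calc triangularGaussSum q (n + 1)
      = ∑ k ∈ range (n + 2),
          (q ^ (k * (k + 1) / 2) * (q ^ (2 * n + 1 - (n + k)) * gaussBinom q (2 * n + 1) (n + k))
          + q ^ (k * (k + 1) / 2) * ((1 + q ^ (2 * n + 2)) * gaussBinom q (2 * n + 1) (n + k + 1))
          + q ^ (k * (k + 1) / 2) * (q ^ (n + k + 2) * gaussBinom q (2 * n + 1) (n + k + 2))) := by
        refine sum_congr rfl fun k hk => ?_
        rw [show 2 * (n + 1) + 1 = 2 * n + 1 + 2 by ring, show n + 1 + k + 1 = n + k + 2 by ring,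
          gaussBinom_add_two_add_two hq (by rw [mem_range] at hk; omega : n + k ≤ 2 * n + 1)]
        ring
    _ = (1 + q ^ (n + 1)) ^ 2 * triangularGaussSum q n := by
        rw [sum_add_distrib, sum_add_distrib, hX, hY, hZ]
        ring

theorem triangularGaussSum_eq (hq : ‖q‖ < 1) (n : ℕ) :
    triangularGaussSum q n = qPoch (-q) q n ^ 2 := by
  induction n with
  | zero => simp [triangularGaussSum, qPoch]
  | succ n ih => rw [triangularGaussSum_succ hq, ih, qPoch_succ]; ring

end TriangularGaussSum

section Limit

variable {q : ℂ}

lemma exists_norm_gaussBinom_le (hq : ‖q‖ < 1) : ∃ C, ∀ N m, ‖gaussBinom q N m‖ ≤ C := by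
  have hlim := tendsto_qPoch q hq
  obtain ⟨B, hB⟩ := hlim.norm.bddAbove_range
  obtain ⟨B', hB'⟩ := (hlim.inv₀ (qPochInf_ne_zero hq hq)).norm.bddAbove_range
  have hB0 : 0 ≤ B := (norm_nonneg _).trans (hB ⟨0, rfl⟩)
  have hB'0 : 0 ≤ B' := (norm_nonneg _).trans (hB' ⟨0, rfl⟩)
  refine ⟨B * B' * B', fun N m => ?_⟩
  rcases le_or_gt m N with h | h
  · rw [gaussBinom_eq_div hq h, div_eq_mul_inv, mul_inv, ← mul_assoc, norm_mul, norm_mul]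
    gcongr
    exacts [hB ⟨N, rfl⟩, hB' ⟨m, rfl⟩, hB' ⟨N - m, rfl⟩]
  · rw [gaussBinom_eq_zero_of_lt q h, norm_zero]
    positivity

lemma tendsto_gaussBinom_central (hq : ‖q‖ < 1) (k : ℕ) :
    Tendsto (fun n => gaussBinom q (2 * n + 1) (n + k + 1)) atTop (𝓝 (qPochInf q q)⁻¹) := by
  have hP := qPochInf_ne_zero hq hq
  have hlim := tendsto_qPoch q hq
  have h : Tendsto (fun n => qPoch q q (2 * n + 1) / (qPoch q q (n + k + 1) * qPoch q q (n - k)))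
      atTop (𝓝 (qPochInf q q / (qPochInf q q * qPochInf q q))) :=
    (hlim.comp (tendsto_atTop_mono (fun n => (by omega : n ≤ 2 * n + 1)) tendsto_id)).div
      ((hlim.comp (tendsto_atTop_mono (fun n => (by omega : n ≤ n + k + 1)) tendsto_id)).mul
        (hlim.comp (tendsto_sub_atTop_nat k))) (mul_ne_zero hP hP)
  rw [div_mul_cancel_left₀ hP] at h
  refine h.congr' ?_
  filter_upwards [eventually_ge_atTop k] with n hn
  rw [gaussBinom_eq_div hq (by omega), show 2 * n + 1 - (n + k + 1) = n - k by omega]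

theorem tendsto_triangularGaussSum (hq : ‖q‖ < 1) :
    Tendsto (triangularGaussSum q) atTop
      (𝓝 ((∑' k : ℕ, q ^ (k * (k + 1) / 2)) * (qPochInf q q)⁻¹)) := by
  obtain ⟨C, hC⟩ := exists_norm_gaussBinom_le hq
  rw [← tsum_mul_right]
  refine (tendsto_tsum_of_dominated_convergence
    (f := fun n k => q ^ (k * (k + 1) / 2) * gaussBinom q (2 * n + 1) (n + k + 1))
    ((summable_geometric_of_lt_one (norm_nonneg q) hq).mul_right C)
    (fun k => (tendsto_gaussBinom_central hq k).const_mul _)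
    (Eventually.of_forall fun n k => ?_)).congr fun n => ?_
  · rw [norm_mul, norm_pow]
    exact mul_le_mul (pow_le_pow_of_le_one (norm_nonneg q) hq.le (le_triangle k)) (hC _ _)
      (norm_nonneg _) (by positivity)
  · refine tsum_eq_sum fun k hk => ?_
    rw [gaussBinom_eq_zero_of_lt q (by simp only [mem_range] at hk; omega), mul_zero]

end Limit

/-- Gauss's identity: `(q^2;q^2)_∞ / (q;q^2)_∞ = ∑_{n≥0} q^{n(n+1)/2}`. -/
theorem gauss_triangular (q : ℂ) (hq : ‖q‖ < 1) :
    qPochInf (q ^ 2) (q ^ 2) / qPochInf q (q ^ 2) = ∑' n : ℕ, q ^ (n * (n + 1) / 2) := by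
  have hq2 : ‖q ^ 2‖ < 1 := by rw [norm_pow]; exact pow_lt_one₀ (norm_nonneg q) hq two_ne_zero
  have hP := qPochInf_ne_zero hq hq
  have hS : (∑' n : ℕ, q ^ (n * (n + 1) / 2)) * (qPochInf q q)⁻¹ = qPochInf (-q) q ^ 2 :=
    tendsto_nhds_unique (tendsto_triangularGaussSum hq)
      (((tendsto_qPoch (-q) hq).pow 2).congr fun n => (triangularGaussSum_eq hq n).symm)
  rw [div_eq_iff (qPochInf_ne_zero hq hq2), ← inv_mul_cancel_right₀ hP (∑' n : ℕ, _), hS]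
  linear_combination (-(qPochInf (-q) q * qPochInf q (q ^ 2)) - 1) * qPochInf_neg_mul_qPochInf hq
    - qPochInf (-q) q * qPochInf_mul_qPochInf_sq hq
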